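/- Let G be a finite simple connected graph and f : V_G → ℝ with f(u) = 0 for some vertex u and f not identically zero. Then there exist adjacent vertices u', v' with f(u') = 0 and f(v') ≠ 0, and the partial signing g agreeing with f everywhere except g(u') = f(v') satisfies WND(f) ≤ WND(g) and SND(g) ≤ SND(f). -/

import Mathlib

open SimpleGraph

/-- The number of strong nodal domains of `f`: connected components of the subgraph
induced on the positive set plus those of the subgraph induced on the negative set. -/
noncomputable def SND {V : Type*} (G : SimpleGraph V) (f : V → ℝ) : ℕ :=
  Nat.card ((G.induce {v | 0 < f v}).ConnectedComponent) +
  Nat.card ((G.induce {v | f v < 0}).ConnectedComponent)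

/-- The number of weak nodal domains of `f`: connected components of the subgraph
induced on `{f ≥ 0}` (resp. `{f ≤ 0}`) containing at least one vertex where `f ≠ 0`. -/
noncomputable def WND {V : Type*} (G : SimpleGraph V) (f : V → ℝ) : ℕ :=
  Nat.card {c : (G.induce {v | 0 ≤ f v}).ConnectedComponent //
      ∃ v : {v | 0 ≤ f v}, (G.induce {v | 0 ≤ f v}).connectedComponentMk v = c ∧ f v.1 ≠ 0} +
  Nat.card {c : (G.induce {v | f v ≤ 0}).ConnectedComponent //
      ∃ v : {v | f v ≤ 0}, (G.induce {v | f v ≤ 0}).connectedComponentMk v = c ∧ f v.1 ≠ 0}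

/-- `g` is a partial signing of `f`: strictly positive where `f` is positive and strictly
negative where `f` is negative. -/
def IsPartialSigning {V : Type*} (f g : V → ℝ) : Prop :=
  ∀ v, (0 < f v → 0 < g v) ∧ (f v < 0 → g v < 0)

/-- `g` is a signing of `f`: a nowhere-zero partial signing of `f`. -/
def IsSigning {V : Type*} (f g : V → ℝ) : Prop :=
  (∀ v, g v ≠ 0) ∧ IsPartialSigning f g

/-- The Urschel number of `f`: the minimum number of strong nodal domains over all
signings of `f`. -/
noncomputable def UN {V : Type*} (G : SimpleGraph V) (f : V → ℝ) : ℕ :=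
  sInf (SND G '' {g | IsSigning f g})

/-
Walking from a zero of `f` to a nonzero vertex crosses an edge `u'v'` with `f u' = 0 ≠ f v'`;
replacing `f` by `-f` if necessary, `f v' > 0`. Setting `g u' := f v'` leaves `{g ≥ 0} = {f ≥ 0}`
and `{g < 0} = {f < 0}`, removes `u'` from `{f ≤ 0}` and adds it to `{f > 0}`. Adding a vertex
adjacent to a set never increases its number of components, which gives `SND g ≤ SND f`. A weak
domain of `f` contains a vertex where `f ≠ 0`, hence `g ≠ 0`, and that vertex survives in `{g ≥ 0}`
resp. `{g ≤ 0}`; two such domains stay apart since the new sets are no larger, so `WND f ≤ WND g`.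
-/

namespace SimpleGraph

variable {V : Type*} [Finite V] (G : SimpleGraph V)

theorem card_connectedComponent_induce_insert_le {S : Set V} {u v : V} (huv : G.Adj u v)
    (hv : v ∈ S) :
    Nat.card (G.induce (insert u S)).ConnectedComponent ≤
      Nat.card (G.induce S).ConnectedComponent := by
  refine Nat.card_le_card_of_surjective
    (ConnectedComponent.map (G.induceHomOfLE (Set.subset_insert u S)).toHom) fun c => ?_
  induction c using ConnectedComponent.ind with
  | _ x =>
    obtain ⟨x, rfl | hx⟩ := x
    · refine ⟨(G.induce S).connectedComponentMk ⟨v, hv⟩, ConnectedComponent.sound ?_⟩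
      exact Adj.reachable (G := G.induce (insert x S)) huv.symm
    · exact ⟨(G.induce S).connectedComponentMk ⟨x, hx⟩, rfl⟩

theorem card_connectedComponent_induce_meeting_le {S T : Set V} (hTS : T ⊆ S)
    {p q : V → Prop} (h : ∀ v ∈ S, p v → v ∈ T ∧ q v) :
    Nat.card {c : (G.induce S).ConnectedComponent //
        ∃ v : S, (G.induce S).connectedComponentMk v = c ∧ p v} ≤
      Nat.card {c : (G.induce T).ConnectedComponent //
        ∃ v : T, (G.induce T).connectedComponentMk v = c ∧ q v} := by
  choose rep hrep using fun c : {c : (G.induce S).ConnectedComponent //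
      ∃ v : S, (G.induce S).connectedComponentMk v = c ∧ p v} => c.2
  let φ := fun c => (G.induce T).connectedComponentMk ⟨rep c, (h _ (rep c).2 (hrep c).2).1⟩
  -- Mapping `φ c` back along `T ⊆ S` recovers `c`, so `φ` is injective.
  have hφ : ∀ c, (φ c).map (G.induceHomOfLE hTS).toHom = c.1 := fun c => (hrep c).1
  refine Nat.card_le_card_of_injective
    (fun c => ⟨φ c, _, rfl, (h _ (rep c).2 (hrep c).2).2⟩) fun c₁ c₂ hc => ?_
  have hc : φ c₁ = φ c₂ := congrArg Subtype.val hc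
  exact Subtype.ext (by rw [← hφ c₁, ← hφ c₂, hc])

end SimpleGraph

section NodalDomains

variable {V : Type*} (G : SimpleGraph V)

theorem SND_neg (f : V → ℝ) : SND G (-f) = SND G f := by
  have hpos : {v | 0 < (-f) v} = {v | f v < 0} := by ext; simp
  have hneg : {v | (-f) v < 0} = {v | 0 < f v} := by ext; simp
  rw [SND, SND, hpos, hneg, add_comm]

theorem WND_neg (f : V → ℝ) : WND G (-f) = WND G f := by
  have hnonneg : {v | 0 ≤ (-f) v} = {v | f v ≤ 0} := by ext; simp
  have hnonpos : {v | (-f) v ≤ 0} = {v | 0 ≤ f v} := by ext; simp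
  rw [WND, WND, hnonneg, hnonpos, add_comm]
  simp only [Pi.neg_apply, ne_eq, neg_eq_zero]

variable [Finite V] [DecidableEq V]

theorem WND_le_WND_update_of_pos {f : V → ℝ} {u v : V} (hu : f u = 0) (hv : 0 < f v) :
    WND G f ≤ WND G (Function.update f u (f v)) := by
  set g := Function.update f u (f v)
  have hg : ∀ w, f w ≠ 0 → g w = f w := fun w hw =>
    Function.update_of_ne (by rintro rfl; exact hw hu) _ _
  have hnonneg : {w | 0 ≤ g w} = {w | 0 ≤ f w} := by
    ext w
    rcases eq_or_ne w u with rfl | hw <;> simp [g, *, hv.le]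
  have hnonpos : {w | g w ≤ 0} = {w | f w ≤ 0} \ {u} := by
    ext w
    rcases eq_or_ne w u with rfl | hw <;> simp [g, *]
  rw [WND, WND, hnonneg, hnonpos]
  refine add_le_add ?_ ?_
  · refine G.card_connectedComponent_induce_meeting_le (p := (f · ≠ 0)) (q := (g · ≠ 0)) le_rfl
      fun w hw hfw => ⟨hw, ?_⟩
    rwa [hg w hfw]
  · refine G.card_connectedComponent_induce_meeting_le (p := (f · ≠ 0)) (q := (g · ≠ 0))
      Set.sdiff_subset fun w hw hfw => ⟨?_, ?_⟩
    · exact ⟨hw, by rintro rfl; exact hfw hu⟩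
    · rwa [hg w hfw]

theorem SND_update_le_SND_of_pos {f : V → ℝ} {u v : V} (huv : G.Adj u v) (hu : f u = 0)
    (hv : 0 < f v) : SND G (Function.update f u (f v)) ≤ SND G f := by
  have hpos : {w | 0 < Function.update f u (f v) w} = insert u {w | 0 < f w} := by
    ext w
    rcases eq_or_ne w u with rfl | hw <;> simp [*]
  have hneg : {w | Function.update f u (f v) w < 0} = {w | f w < 0} := by
    ext w
    rcases eq_or_ne w u with rfl | hw <;> simp [*, hv.le]
  rw [SND, SND, hpos, hneg]
  exact add_le_add_left (G.card_connectedComponent_induce_insert_le huv hv) _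

end NodalDomains

/-- on a finite connected simple graph, if `f` vanishes at some vertex
but is not identically zero, then there are adjacent vertices `u'`, `v'` with
`f u' = 0` and `f v' ≠ 0`, and the partial signing obtained by resetting the value
at `u'` to `f v'` does not decrease `WND` and does not increase `SND`. -/
theorem stmt_15 {V : Type*} [Fintype V] [DecidableEq V] (G : SimpleGraph V)
    (hconn : G.Connected) (f : V → ℝ) (u : V) (hu : f u = 0) (hf : f ≠ 0) :
    ∃ u' v' : V, G.Adj u' v' ∧ f u' = 0 ∧ f v' ≠ 0 ∧
      WND G f ≤ WND G (Function.update f u' (f v')) ∧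
      SND G (Function.update f u' (f v')) ≤ SND G f := by
  obtain ⟨w, hw⟩ : ∃ w, f w ≠ 0 := Function.ne_iff.mp hf
  obtain ⟨d, -, hd₁, hd₂⟩ :=
    (hconn.preconnected u w).some.exists_boundary_dart {x | f x = 0} hu hw
  refine ⟨d.fst, d.snd, d.adj, hd₁, hd₂, ?_⟩
  rcases lt_or_gt_of_ne hd₂ with hneg | hpos
  · have hupdate : Function.update (-f) d.fst ((-f) d.snd) =
        -Function.update f d.fst (f d.snd) := by
      ext x
      rcases eq_or_ne x d.fst with rfl | hx <;> simp [*]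
    have hneg' : 0 < (-f) d.snd := neg_pos.mpr hneg
    have hfst : (-f) d.fst = 0 := by simpa using hd₁
    have hW := WND_le_WND_update_of_pos G hfst hneg'
    have hS := SND_update_le_SND_of_pos G d.adj hfst hneg'
    rw [hupdate, WND_neg, WND_neg] at hW
    rw [hupdate, SND_neg, SND_neg] at hS
    exact ⟨hW, hS⟩
  · exact ⟨WND_le_WND_update_of_pos G hd₁ hpos, SND_update_le_SND_of_pos G d.adj hd₁ hpos⟩
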